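/- arXiv:2509.13153 — 2 statements merged into one kernel-verified Lean document; each statement's English description precedes it below -/
import Mathlib

section
/- Let F = ℚ(√z) be a real quadratic field, where z is a square-free positive integer with at least s+2 distinct prime divisors. Then 2^s divides the class number of F. -/
open NumberField
open scoped symmDiff
set_option maxSynthPendingDepth 2
set_option maxHeartbeats 1000000

/-! ### Elementary rational lemmas -/

lemma sf_rat_square_eq_one {n : ℕ} (hn : Squarefree n) (h : IsSquare ((n : ℚ))) : n = 1 := by
  rw [Rat.isSquare_natCast_iff] at h
  obtain ⟨r, hr⟩ := h
  have hu : IsUnit r := hn r (by rw [← hr])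
  rw [Nat.isUnit_iff] at hu
  simp [hr, hu]

lemma sf_div_rat_sq {z m : ℕ} (hz : Squarefree z) (hz0 : 0 < z) (hm : m ∣ z)
    (q : ℚ) (h : q ^ 2 * z = m) : m = z := by
  obtain ⟨k, hk⟩ := hm
  have hm0 : m ≠ 0 := by rintro rfl; rw [zero_mul] at hk; omega
  have hk0' : k ≠ 0 := by rintro rfl; rw [mul_zero] at hk; omega
  have hq0 : q ≠ 0 := by
    rintro rfl
    norm_num at h
    exact hm0 (by exact_mod_cast h.symm)
  have hzq : (z : ℚ) = (m : ℚ) * k := by exact_mod_cast congrArg (Nat.cast : ℕ → ℚ) hk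
  have hmq : (m : ℚ) ≠ 0 := Nat.cast_ne_zero.mpr hm0
  have hqk : q ^ 2 * k = 1 := by
    rw [hzq] at h
    exact mul_right_cancel₀ hmq (show q ^ 2 * k * m = 1 * m by rw [one_mul]; linear_combination h)
  have hksq : IsSquare ((k : ℚ)) := by
    refine ⟨q⁻¹, ?_⟩
    have h1 : (k : ℚ) * q ^ 2 = 1 := by linear_combination hqk
    have h2 : (k : ℚ) = (q ^ 2)⁻¹ := eq_inv_of_mul_eq_one_left h1
    rw [h2, pow_two, mul_inv]
  have hksf : Squarefree k := hz.squarefree_of_dvd ⟨m, by rw [hk]; ring⟩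
  have : k = 1 := sf_rat_square_eq_one hksf hksq
  subst this; omega

lemma eq_two_pow : ∀ n : ℕ, n ≠ 0 → (∀ q : ℕ, q.Prime → q ∣ n → q = 2) → ∃ k, n = 2 ^ k := by
  intro n
  induction n using Nat.strong_induction_on with
  | _ n ih =>
    intro hn hq
    rcases eq_or_ne n 1 with rfl | h1
    · exact ⟨0, rfl⟩
    · have hp := Nat.minFac_prime h1
      have h2 : n.minFac = 2 := hq _ hp (Nat.minFac_dvd n)
      obtain ⟨m, hm⟩ := Nat.minFac_dvd n
      rw [h2] at hm
      have hm0 : m ≠ 0 := by rintro rfl; omega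
      have hmlt : m < n := by omega
      obtain ⟨k, hk⟩ := ih m hmlt hm0
        (fun q hq' hd => hq q hq' (hd.trans ⟨2, by rw [hm]; ring⟩))
      exact ⟨k + 1, by rw [hm, hk, pow_succ]; ring⟩

lemma prod_mul_prod_symmDiff {M : Type*} [CommMonoid M] (S T : Finset ℕ) (f : ℕ → M) :
    (∏ p ∈ S, f p) * ∏ p ∈ T, f p = (∏ p ∈ S ∩ T, f p) ^ 2 * ∏ p ∈ S ∆ T, f p := by
  classical
  have h1 : ∏ p ∈ S, f p = (∏ p ∈ S \ T, f p) * ∏ p ∈ S ∩ T, f p := by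
    rw [← Finset.prod_union (Finset.disjoint_sdiff_inter S T), Finset.sdiff_union_inter]
  have h2 : ∏ p ∈ T, f p = (∏ p ∈ T \ S, f p) * ∏ p ∈ T ∩ S, f p := by
    rw [← Finset.prod_union (Finset.disjoint_sdiff_inter T S), Finset.sdiff_union_inter]
  have h3 : ∏ p ∈ S ∆ T, f p = (∏ p ∈ S \ T, f p) * ∏ p ∈ T \ S, f p := by
    rw [symmDiff_def, Finset.sup_eq_union, Finset.prod_union disjoint_sdiff_sdiff]
  rw [h1, h2, h3, Finset.inter_comm T S, pow_two]
  simp only [mul_assoc, mul_comm, mul_left_comm]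

/-! ### Structure of the quadratic field -/

section Quad
variable {F : Type} [Field F] [Algebra ℚ F]

lemma quad_decomp (hdeg : Module.finrank ℚ F = 2) {α : F}
    (hni : ∀ q : ℚ, algebraMap ℚ F q ≠ α) (x : F) :
    ∃ a b : ℚ, x = algebraMap ℚ F a + b • α := by
  have hα0 : α ≠ 0 := fun h => hni 0 (by rw [map_zero, h])
  have hli : LinearIndependent ℚ ![(1 : F), α] := by
    rw [linearIndependent_fin2]
    refine ⟨by simpa using hα0, fun a ha => ?_⟩
    simp only [Matrix.cons_val_one, Matrix.head_cons, Matrix.cons_val_zero] at ha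
    have ha0 : a ≠ 0 := by rintro rfl; rw [zero_smul] at ha; exact one_ne_zero ha.symm
    apply hni a⁻¹
    rw [Algebra.algebraMap_eq_smul_one, ← ha, smul_smul, inv_mul_cancel₀ ha0, one_smul]
  let B : Module.Basis (Fin 2) ℚ F := basisOfLinearIndependentOfCardEqFinrank hli (by simp [hdeg])
  have hB : ∀ i, B i = ![(1 : F), α] i := fun i => by
    simp [B, coe_basisOfLinearIndependentOfCardEqFinrank]
  refine ⟨B.repr x 0, B.repr x 1, ?_⟩
  have h2 := B.sum_repr x
  rw [Fin.sum_univ_two, hB 0, hB 1] at h2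
  simp only [Matrix.cons_val_zero, Matrix.cons_val_one, Matrix.head_cons] at h2
  rw [Algebra.algebraMap_eq_smul_one]
  exact h2.symm

lemma quad_uniq {α : F} (hni : ∀ q : ℚ, algebraMap ℚ F q ≠ α) (a b : ℚ)
    (h : algebraMap ℚ F a + b • α = 0) : a = 0 ∧ b = 0 := by
  have hb : b = 0 := by
    by_contra hb0
    apply hni (b⁻¹ * (-a))
    rw [map_mul, map_neg]
    have hba : b • α = -(algebraMap ℚ F a) := by linear_combination h
    rw [← hba, ← Algebra.smul_def, smul_smul, inv_mul_cancel₀ hb0, one_smul]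
  refine ⟨?_, hb⟩
  rw [hb, zero_smul, add_zero] at h
  exact (map_eq_zero _).mp h

lemma quad_sq_rat (hdeg : Module.finrank ℚ F = 2) {α : F} {z : ℕ} (hα : α ^ 2 = z)
    (hni : ∀ q : ℚ, algebraMap ℚ F q ≠ α) (x : F) (n : ℕ) (hx : x ^ 2 = n) :
    (∃ q : ℚ, q ^ 2 = (n : ℚ)) ∨ (∃ q : ℚ, q ^ 2 * z = (n : ℚ)) := by
  obtain ⟨a, b, hab⟩ := quad_decomp hdeg hni x
  have hkey : algebraMap ℚ F (a ^ 2 + b ^ 2 * z - n) + (2 * a * b) • α = 0 := by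
    have hzF : (algebraMap ℚ F) ((z : ℚ)) = ((z : ℕ) : F) := by push_cast; ring
    have hnF : (algebraMap ℚ F) ((n : ℚ)) = ((n : ℕ) : F) := by push_cast; ring
    rw [map_sub, map_add, map_mul, hzF, hnF, ← hx, hab, Algebra.smul_def, Algebra.smul_def,
        map_mul, map_mul, map_ofNat, map_pow, map_pow]
    linear_combination (-(algebraMap ℚ F b) ^ 2) * hα
  obtain ⟨h1, h2⟩ := quad_uniq hni _ _ hkey
  have hab0 : a = 0 ∨ b = 0 := by
    rcases mul_eq_zero.mp h2 with h | h
    · rcases mul_eq_zero.mp h with h' | h'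
      · norm_num at h'
      · exact Or.inl h'
    · exact Or.inr h
  rcases hab0 with h | h
  · right
    refine ⟨b, ?_⟩
    rw [h] at h1; linear_combination h1
  · left
    refine ⟨a, ?_⟩
    rw [h] at h1; linear_combination h1

end Quad

/-! ### Real embedding -/

section RealEmb
variable {F : Type} [Field F] [NumberField F]

lemma exists_real_embedding {z : ℕ} (hz1 : 0 < z) {α : F} (hα : α ^ 2 = z)
    (hdecomp : ∀ x : F, ∃ a b : ℚ, x = algebraMap ℚ F a + b • α) :
    Nonempty (F →+* ℝ) := by
  have hne : Nonempty (F →+* ℂ) := by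
    rw [← Fintype.card_pos_iff, NumberField.Embeddings.card F ℂ]
    exact Module.finrank_pos
  obtain ⟨ψ⟩ := hne
  set c : ℂ := ψ α with hc
  have hc2 : c ^ 2 = (z : ℂ) := by rw [hc, ← map_pow, hα, map_natCast]
  have hcre : (starRingEnd ℂ) c = c := by
    have h1 : ((starRingEnd ℂ) c) ^ 2 = c ^ 2 := by
      rw [← map_pow, hc2, Complex.conj_natCast]
    have h2 : ((starRingEnd ℂ) c - c) * ((starRingEnd ℂ) c + c) = 0 := by
      linear_combination h1
    rcases mul_eq_zero.mp h2 with h | h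
    · exact sub_eq_zero.mp h
    · exfalso
      have hre : c.re = 0 := by
        have := congrArg Complex.re (eq_neg_of_add_eq_zero_left h)
        simp only [Complex.conj_re, Complex.neg_re] at this
        linarith
      have hz' : ((z : ℂ)).re = c.re ^ 2 - c.im ^ 2 := by
        rw [← hc2, pow_two, Complex.mul_re]; ring
      rw [hre] at hz'
      simp only [Complex.natCast_re] at hz'
      nlinarith [sq_nonneg c.im, (by exact_mod_cast hz1 : (0:ℝ) < (z:ℝ))]
  have hreal : ComplexEmbedding.IsReal ψ := by
    rw [ComplexEmbedding.isReal_iff]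
    ext x
    rw [ComplexEmbedding.conjugate_coe_eq]
    obtain ⟨a, b, rfl⟩ := hdecomp x
    have ha : ψ (algebraMap ℚ F a) = (a : ℂ) := by rw [← RingHom.comp_apply, eq_ratCast]
    have hb : ψ (b • α) = (b : ℂ) * c := by
      rw [Algebra.smul_def, map_mul, ← RingHom.comp_apply, eq_ratCast]
    rw [map_add, ha, hb, map_add, map_mul, map_ratCast, map_ratCast, hcre]
  exact ⟨hreal.embedding⟩

end RealEmb

/-! ### Units -/

section UnitsPart
variable {F : Type} [Field F] [NumberField F]

lemma real_pow_eq_one {x : ℝ} {n : ℕ} (hn : 0 < n) (h : x ^ n = 1) : x = 1 ∨ x = -1 := by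
  have habs : |x| = 1 := by
    rcases lt_trichotomy (|x|) 1 with hlt | heq | hgt
    · exfalso
      have : |x| ^ n < 1 := by
        calc |x| ^ n < 1 ^ n := pow_lt_pow_left₀ hlt (abs_nonneg x) hn.ne'
        _ = 1 := one_pow n
      rw [← abs_pow, h] at this; simp at this
    · exact heq
    · exfalso
      have : 1 < |x| ^ n := one_lt_pow₀ hgt hn.ne'
      rw [← abs_pow, h] at this; simp at this
  exact (abs_eq (by norm_num)).mp habs

lemma tors_pm_one (φ : F →+* ℝ) (τ : (𝓞 F)ˣ) (hτ : τ ∈ NumberField.Units.torsion F) :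
    τ = 1 ∨ τ = -1 := by
  set φ' : 𝓞 F →+* ℝ := φ.comp (algebraMap (𝓞 F) F) with hφ'
  have hinj : Function.Injective φ' :=
    φ.injective.comp NumberField.RingOfIntegers.coe_injective
  have hfin : IsOfFinOrder τ := (CommGroup.mem_torsion τ).mp hτ
  obtain ⟨n, hn, hτn⟩ := isOfFinOrder_iff_pow_eq_one.mp hfin
  have hval : ((τ : 𝓞 F)) ^ n = 1 := by
    have := congrArg (Units.val) hτn
    simpa using this
  have hφτ : (φ' (τ : 𝓞 F)) ^ n = 1 := by rw [← map_pow, hval, map_one]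
  rcases real_pow_eq_one hn hφτ with h | h
  · left
    rw [← Units.val_eq_one]
    exact hinj (by rw [h, map_one])
  · right
    rw [Units.ext_iff, Units.val_neg, Units.val_one]
    exact hinj (by rw [map_neg, map_one, h])

lemma unit_rank_le (hdeg : Module.finrank ℚ F = 2) : NumberField.Units.rank F ≤ 1 := by
  have hcard := NumberField.InfinitePlace.card_eq_nrRealPlaces_add_nrComplexPlaces F
  have hsum := NumberField.InfinitePlace.card_add_two_mul_card_eq_rank F
  rw [hdeg] at hsum
  unfold NumberField.Units.rank
  omega

lemma even_coord_isSquare (φ : F →+* ℝ) (w : (𝓞 F)ˣ)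
    (hw : 0 < φ (algebraMap (𝓞 F) F (w : 𝓞 F)))
    (m : Additive ((𝓞 F)ˣ ⧸ NumberField.Units.torsion F))
    (hm : (2 : ℤ) • m = Additive.ofMul (QuotientGroup.mk w)) : IsSquare w := by
  obtain ⟨v, hv⟩ : ∃ v : (𝓞 F)ˣ, Additive.ofMul (QuotientGroup.mk v) = m := by
    obtain ⟨q, hq⟩ := Additive.ofMul.surjective m
    obtain ⟨v, hv⟩ := QuotientGroup.mk_surjective q
    exact ⟨v, by rw [hv, hq]⟩
  have hm' : ((QuotientGroup.mk v : (𝓞 F)ˣ ⧸ NumberField.Units.torsion F) ^ (2:ℤ))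
      = QuotientGroup.mk w := by
    apply Additive.ofMul.injective
    rw [ofMul_zpow, hv, hm]
  have hmk : (QuotientGroup.mk (v ^ 2) : (𝓞 F)ˣ ⧸ NumberField.Units.torsion F)
      = QuotientGroup.mk w := by
    rw [← hm', zpow_two, pow_two]
    rfl
  have hτ : (v ^ 2)⁻¹ * w ∈ NumberField.Units.torsion F := QuotientGroup.eq.mp hmk
  have hwd : w = v ^ 2 * ((v ^ 2)⁻¹ * w) := by group
  rcases tors_pm_one φ _ hτ with h | h
  · rw [h, mul_one] at hwd
    exact ⟨v, by rw [hwd, pow_two]⟩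
  · exfalso
    rw [h] at hwd
    have hval : (w : 𝓞 F) = -((v : 𝓞 F) ^ 2) := by
      rw [hwd]
      simp [pow_two]
    have hv0 : φ (algebraMap (𝓞 F) F (v : 𝓞 F)) ≠ 0 := by
      intro h0
      have : ((v : 𝓞 F) : F) ≠ 0 := by
        simpa using (v.isUnit.map (algebraMap (𝓞 F) F)).ne_zero
      exact this (φ.injective (by rwa [map_zero]))
    have : φ (algebraMap (𝓞 F) F (w : 𝓞 F)) < 0 := by
      rw [hval]
      rw [map_neg, map_neg, map_pow, map_pow]
      have := sq_nonneg (φ (algebraMap (𝓞 F) F (v : 𝓞 F)))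
      have h2 : (φ (algebraMap (𝓞 F) F (v : 𝓞 F))) ^ 2 > 0 :=
        lt_of_le_of_ne this (by intro hh; exact hv0 (pow_eq_zero_iff two_ne_zero |>.mp hh.symm))
      linarith
    linarith

lemma unit_trichotomy (hdeg : Module.finrank ℚ F = 2) (φ : F →+* ℝ) (u v : (𝓞 F)ˣ)
    (hu : 0 < φ (algebraMap (𝓞 F) F (u : 𝓞 F))) (hv : 0 < φ (algebraMap (𝓞 F) F (v : 𝓞 F))) :
    IsSquare u ∨ IsSquare v ∨ IsSquare (u * v) := by
  classical
  set B := NumberField.Units.basisModTorsion F with hB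
  set c : (𝓞 F)ˣ → (Fin (NumberField.Units.rank F) →₀ ℤ) :=
    fun w => B.repr (Additive.ofMul (QuotientGroup.mk w)) with hc
  have hc_mul : ∀ x y : (𝓞 F)ˣ, c (x * y) = c x + c y := by
    intro x y
    have : (Additive.ofMul (QuotientGroup.mk (x * y) : (𝓞 F)ˣ ⧸ NumberField.Units.torsion F))
        = Additive.ofMul (QuotientGroup.mk x) + Additive.ofMul (QuotientGroup.mk y) := rfl
    rw [hc]
    simp only [this, map_add]
  have key : ∀ w : (𝓞 F)ˣ, 0 < φ (algebraMap (𝓞 F) F (w : 𝓞 F)) →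
      (∀ i, Even (c w i)) → IsSquare w := by
    intro w hw hev
    set e : Fin (NumberField.Units.rank F) →₀ ℤ :=
      (c w).mapRange (fun t => t / 2) (by norm_num) with he
    have h2e : (2 : ℤ) • e = c w := by
      ext i
      simp only [Finsupp.smul_apply, he, Finsupp.mapRange_apply, smul_eq_mul]
      exact Int.mul_ediv_cancel' ((hev i).two_dvd)
    apply even_coord_isSquare φ w hw (B.repr.symm e)
    have : (2 : ℤ) • B.repr.symm e = B.repr.symm ((2 : ℤ) • e) := (map_smul _ _ _).symm
    rw [this, h2e]
    exact B.repr.symm_apply_apply _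
  by_cases h1 : ∀ i, Even (c u i)
  · exact Or.inl (key u hu h1)
  by_cases h2 : ∀ i, Even (c v i)
  · exact Or.inr (Or.inl (key v hv h2))
  push_neg at h1 h2
  obtain ⟨i, hi⟩ := h1
  obtain ⟨j, hj⟩ := h2
  have hij : i = j := by
    have hr : NumberField.Units.rank F ≤ 1 := unit_rank_le hdeg
    have := i.2; have := j.2
    exact Fin.ext (by omega)
  refine Or.inr (Or.inr (key (u * v) ?_ ?_))
  · rw [Units.val_mul, map_mul, map_mul]
    exact mul_pos hu hv
  · intro k
    have hk : k = i := by
      have hr : NumberField.Units.rank F ≤ 1 := unit_rank_le hdeg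
      have := i.2; have := k.2
      exact Fin.ext (by omega)
    subst hk hij
    rw [hc_mul]
    simp only [Finsupp.add_apply]
    rw [Int.even_add]
    constructor
    · intro h; exact absurd h hi
    · intro h; exact absurd h hj

end UnitsPart

/-! ### Ideals -/

section IdealPart
open Ideal
variable {F : Type} [Field F] [NumberField F]

lemma alpha_integral {z : ℕ} {α : F} (hα : α ^ 2 = z) : IsIntegral ℤ α := by
  refine ⟨Polynomial.X ^ 2 - Polynomial.C (z : ℤ), Polynomial.monic_X_pow_sub_C _ two_ne_zero, ?_⟩
  simp [hα]

/-- the ramified prime ideal above `p` -/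
noncomputable def Pid (α₀ : 𝓞 F) (p : ℕ) : Ideal (𝓞 F) := Ideal.span {(p : 𝓞 F), α₀}

lemma Pid_ne_zero (α₀ : 𝓞 F) {p : ℕ} (hp : p ≠ 0) : Pid α₀ p ≠ 0 := by
  intro h
  have hmem : (p : 𝓞 F) ∈ Pid α₀ p := subset_span (by simp)
  rw [h] at hmem
  simp only [Submodule.zero_eq_bot, Ideal.mem_bot] at hmem
  exact hp (by exact_mod_cast hmem)

lemma alpha0_sq {z : ℕ} {α : F} (hα : α ^ 2 = z) (α₀ : 𝓞 F)
    (hα₀ : algebraMap (𝓞 F) F α₀ = α) : α₀ ^ 2 = (z : 𝓞 F) := by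
  apply NumberField.RingOfIntegers.coe_injective
  rw [map_pow, hα₀, hα, map_natCast]

lemma Pid_sq {z : ℕ} (hsq : Squarefree z) {α : F} (hα : α ^ 2 = z) (α₀ : 𝓞 F)
    (hα₀ : algebraMap (𝓞 F) F α₀ = α) {p : ℕ} (hp : p ∈ z.primeFactors) :
    Pid α₀ p ^ 2 = Ideal.span {(p : 𝓞 F)} := by
  have hpp : p.Prime := Nat.prime_of_mem_primeFactors hp
  obtain ⟨m, hm⟩ := Nat.dvd_of_mem_primeFactors hp
  have hpm : ¬ p ∣ m := by
    intro ⟨k, hk⟩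
    exact hpp.not_isUnit (hsq p ⟨k, by rw [hm, hk]; ring⟩)
  have hα₀sq : α₀ ^ 2 = (z : 𝓞 F) := alpha0_sq hα α₀ hα₀
  rw [Pid, pow_two, span_pair_mul_span_pair]
  apply le_antisymm
  · rw [span_le]
    rintro x hx
    simp only [Set.mem_insert_iff, Set.mem_singleton_iff] at hx
    rcases hx with rfl | rfl | rfl | rfl
    · exact Ideal.mem_span_singleton.mpr ⟨p, by push_cast; ring⟩
    · exact Ideal.mem_span_singleton.mpr ⟨α₀, by ring⟩
    · exact Ideal.mem_span_singleton.mpr ⟨α₀, by ring⟩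
    · refine Ideal.mem_span_singleton.mpr ⟨(m : 𝓞 F), ?_⟩
      rw [← pow_two, hα₀sq, hm]; push_cast; ring
  · rw [span_le, Set.singleton_subset_iff]
    have hgcd : Nat.gcd (p ^ 2) z = p := by
      rw [hm, pow_two, Nat.gcd_mul_left, Nat.Coprime.gcd_eq_one, mul_one]
      exact (Nat.Prime.coprime_iff_not_dvd hpp).mpr hpm
    have hbez := Int.gcd_eq_gcd_ab ((p : ℤ) ^ 2) (z : ℤ)
    have hgcd' : Int.gcd ((p : ℤ) ^ 2) (z : ℤ) = p := by
      have : ((p : ℤ) ^ 2) = ((p ^ 2 : ℕ) : ℤ) := by push_cast; ring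
      rw [this, Int.gcd_natCast_natCast, hgcd]
    rw [hgcd'] at hbez
    set A := Int.gcdA ((p : ℤ) ^ 2) (z : ℤ) with hA
    set B := Int.gcdB ((p : ℤ) ^ 2) (z : ℤ) with hB
    have hZ : (z : 𝓞 F) = α₀ * α₀ := by rw [← pow_two, hα₀sq]
    have hO : (p : 𝓞 F) = ((p : 𝓞 F) * (p : 𝓞 F)) * (A : 𝓞 F) + (α₀ * α₀) * (B : 𝓞 F) := by
      rw [← hZ]
      have := congrArg (fun t : ℤ => (t : 𝓞 F)) hbez
      push_cast at this ⊢
      linear_combination this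
    have hmem : ((p : 𝓞 F) * (p : 𝓞 F)) * (A : 𝓞 F) + (α₀ * α₀) * (B : 𝓞 F) ∈
        span {(p : 𝓞 F) * (p : 𝓞 F), (p : 𝓞 F) * α₀, α₀ * (p : 𝓞 F), α₀ * α₀} := by
      refine add_mem (Ideal.mul_mem_right _ _ (subset_span ?_))
        (Ideal.mul_mem_right _ _ (subset_span ?_)) <;> simp
    rwa [← hO] at hmem

lemma prodPid_mem (α₀ : 𝓞 F) {S : Finset ℕ} (hS : ∀ p ∈ S, p ≠ 0) :
    (∏ p ∈ S, Pid α₀ p) ∈ nonZeroDivisors (Ideal (𝓞 F)) :=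
  mem_nonZeroDivisors_of_ne_zero (Finset.prod_ne_zero_iff.mpr fun p hp => Pid_ne_zero α₀ (hS p hp))

open scoped Classical in
noncomputable def fcl (α₀ : 𝓞 F) (S : Finset ℕ) : ClassGroup (𝓞 F) :=
  if h : (∏ p ∈ S, Pid α₀ p) ∈ nonZeroDivisors (Ideal (𝓞 F)) then ClassGroup.mk0 ⟨_, h⟩ else 1

lemma fcl_eq (α₀ : 𝓞 F) {S : Finset ℕ} (hS : ∀ p ∈ S, p ≠ 0) :
    fcl α₀ S = ClassGroup.mk0 ⟨∏ p ∈ S, Pid α₀ p, prodPid_mem α₀ hS⟩ := by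
  unfold fcl
  rw [dif_pos (prodPid_mem α₀ hS)]

lemma mk0_span_singleton_eq_one {x : 𝓞 F} (h : Ideal.span {x} ∈ nonZeroDivisors (Ideal (𝓞 F))) :
    ClassGroup.mk0 ⟨Ideal.span {x}, h⟩ = 1 :=
  (ClassGroup.mk0_eq_one_iff h).mpr ⟨x, rfl⟩

lemma mk0_eq_mk0_of {I J : Ideal (𝓞 F)} (hI : I ∈ nonZeroDivisors (Ideal (𝓞 F)))
    (hJ : J ∈ nonZeroDivisors (Ideal (𝓞 F))) {x : 𝓞 F} (hx : x ≠ 0)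
    (h : I = Ideal.span {x} * J) : ClassGroup.mk0 ⟨I, hI⟩ = ClassGroup.mk0 ⟨J, hJ⟩ := by
  have hxm : Ideal.span {x} ∈ nonZeroDivisors (Ideal (𝓞 F)) :=
    mem_nonZeroDivisors_of_ne_zero (by simpa using hx)
  have hsub : (⟨I, hI⟩ : ↥(nonZeroDivisors (Ideal (𝓞 F)))) = ⟨Ideal.span {x}, hxm⟩ * ⟨J, hJ⟩ :=
    Subtype.ext h
  rw [hsub, MonoidHom.map_mul, mk0_span_singleton_eq_one hxm, one_mul]

lemma fcl_empty (α₀ : 𝓞 F) : fcl α₀ (∅ : Finset ℕ) = 1 := by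
  have h1 : (∏ p ∈ (∅ : Finset ℕ), Pid α₀ p) = Ideal.span {(1 : 𝓞 F)} := by
    simp [Ideal.span_singleton_one, Ideal.one_eq_top]
  have hmem : (∏ p ∈ (∅ : Finset ℕ), Pid α₀ p) ∈ nonZeroDivisors (Ideal (𝓞 F)) := by
    rw [h1]
    exact mem_nonZeroDivisors_of_ne_zero (by simp [Ideal.span_singleton_one, Ideal.one_eq_top])
  unfold fcl
  rw [dif_pos hmem, ClassGroup.mk0_eq_one_iff]
  exact ⟨1, by simpa using h1⟩

variable {z : ℕ} (hsq : Squarefree z) {α : F} (hα : α ^ 2 = z) (α₀ : 𝓞 F)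
    (hα₀ : algebraMap (𝓞 F) F α₀ = α)

include hsq hα hα₀ in
lemma fcl_mul {S T : Finset ℕ} (hS : S ⊆ z.primeFactors) (hT : T ⊆ z.primeFactors) :
    fcl α₀ S * fcl α₀ T = fcl α₀ (S ∆ T) := by
  have hP0 : ∀ p ∈ z.primeFactors, p ≠ 0 := fun p hp => (Nat.prime_of_mem_primeFactors hp).ne_zero
  have hSd : S ∆ T ⊆ z.primeFactors := fun p hp => by
    rcases Finset.mem_symmDiff.mp hp with ⟨h, _⟩ | ⟨h, _⟩
    exacts [hS h, hT h]
  have hg0 : ((∏ p ∈ S ∩ T, p : ℕ) : 𝓞 F) ≠ 0 := by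
    rw [Nat.cast_ne_zero]
    exact Finset.prod_ne_zero_iff.mpr fun p hp => hP0 p (hS (Finset.mem_of_mem_inter_left hp))
  have hgmem : Ideal.span {((∏ p ∈ S ∩ T, p : ℕ) : 𝓞 F)} ∈ nonZeroDivisors (Ideal (𝓞 F)) :=
    mem_nonZeroDivisors_of_ne_zero (by simpa using hg0)
  have hid : (∏ p ∈ S, Pid α₀ p) * (∏ p ∈ T, Pid α₀ p)
      = Ideal.span {((∏ p ∈ S ∩ T, p : ℕ) : 𝓞 F)} * ∏ p ∈ S ∆ T, Pid α₀ p := by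
    have h1 : ∏ p ∈ S, Pid α₀ p = (∏ p ∈ S \ T, Pid α₀ p) * ∏ p ∈ S ∩ T, Pid α₀ p := by
      rw [← Finset.prod_union (Finset.disjoint_sdiff_inter S T), Finset.sdiff_union_inter]
    have h2 : ∏ p ∈ T, Pid α₀ p = (∏ p ∈ T \ S, Pid α₀ p) * ∏ p ∈ T ∩ S, Pid α₀ p := by
      rw [← Finset.prod_union (Finset.disjoint_sdiff_inter T S), Finset.sdiff_union_inter]
    have h3 : ∏ p ∈ S ∆ T, Pid α₀ p = (∏ p ∈ S \ T, Pid α₀ p) * ∏ p ∈ T \ S, Pid α₀ p := by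
      rw [symmDiff_def, Finset.sup_eq_union, Finset.prod_union disjoint_sdiff_sdiff]
    have h4 : (∏ p ∈ S ∩ T, Pid α₀ p) * (∏ p ∈ T ∩ S, Pid α₀ p)
        = Ideal.span {((∏ p ∈ S ∩ T, p : ℕ) : 𝓞 F)} := by
      rw [Finset.inter_comm T S, ← pow_two, ← Finset.prod_pow]
      rw [Finset.prod_congr rfl
        (fun p hp => Pid_sq hsq hα α₀ hα₀ (hS (Finset.mem_of_mem_inter_left hp)))]
      rw [Ideal.prod_span_singleton, Nat.cast_prod]
    calc (∏ p ∈ S, Pid α₀ p) * (∏ p ∈ T, Pid α₀ p)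
        = ((∏ p ∈ S ∩ T, Pid α₀ p) * (∏ p ∈ T ∩ S, Pid α₀ p)) *
          ((∏ p ∈ S \ T, Pid α₀ p) * ∏ p ∈ T \ S, Pid α₀ p) := by rw [h1, h2]; ring
      _ = _ := by rw [h3, h4]
  rw [fcl_eq α₀ (fun p hp => hP0 p (hS hp)), fcl_eq α₀ (fun p hp => hP0 p (hT hp)),
      fcl_eq α₀ (fun p hp => hP0 p (hSd hp)), ← MonoidHom.map_mul]
  rw [Submonoid.mk_mul_mk]
  exact mk0_eq_mk0_of _ _ hg0 hid

include hsq hα hα₀ in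
lemma ker_unit {S : Finset ℕ} (hS : S ⊆ z.primeFactors) (hone : fcl α₀ S = 1) :
    ∃ u : (𝓞 F)ˣ, ∃ β : 𝓞 F, β ^ 2 = (u : 𝓞 F) * ((∏ p ∈ S, p : ℕ) : 𝓞 F) := by
  have hP0 : ∀ p ∈ S, p ≠ 0 := fun p hp => (Nat.prime_of_mem_primeFactors (hS hp)).ne_zero
  rw [fcl_eq α₀ hP0, ClassGroup.mk0_eq_one_iff] at hone
  obtain ⟨β, hβ⟩ := hone
  rw [Ideal.submodule_span_eq] at hβ
  have hsq2 : Ideal.span {β ^ 2} = Ideal.span {((∏ p ∈ S, p : ℕ) : 𝓞 F)} := by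
    rw [← Ideal.span_singleton_pow, ← hβ, ← Finset.prod_pow]
    rw [Finset.prod_congr rfl (fun p hp => Pid_sq hsq hα α₀ hα₀ (hS hp))]
    rw [Ideal.prod_span_singleton, Nat.cast_prod]
  obtain ⟨u, hu⟩ := Ideal.span_singleton_eq_span_singleton.mp hsq2
  refine ⟨u⁻¹, β, ?_⟩
  rw [← hu, mul_comm ((u⁻¹ : (𝓞 F)ˣ) : 𝓞 F), Units.mul_inv_cancel_right]

end IdealPart

/-! ### The kernel relation -/

section Kernel
variable {F : Type} [Field F] [NumberField F]

lemma kernel_rel {z : ℕ} (hz0 : 0 < z) (hsq : Squarefree z) (hdeg : Module.finrank ℚ F = 2)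
    {α : F} (hα : α ^ 2 = z) (hni : ∀ q : ℚ, algebraMap ℚ F q ≠ α)
    {S T : Finset ℕ} (hS : S ⊆ z.primeFactors) (hT : T ⊆ z.primeFactors)
    {uS uT w : (𝓞 F)ˣ} {βS βT : 𝓞 F}
    (hβS : βS ^ 2 = (uS : 𝓞 F) * ((∏ p ∈ S, p : ℕ) : 𝓞 F))
    (hβT : βT ^ 2 = (uT : 𝓞 F) * ((∏ p ∈ T, p : ℕ) : 𝓞 F))
    (hw : uS = uT * w * w) :
    S = T ∨ S ∆ T = z.primeFactors := by
  classical
  have hP0 : ∀ p ∈ z.primeFactors, p ≠ 0 := fun p hp => (Nat.prime_of_mem_primeFactors hp).ne_zero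
  have hSd : S ∆ T ⊆ z.primeFactors := fun p hp => by
    rcases Finset.mem_symmDiff.mp hp with ⟨h, _⟩ | ⟨h, _⟩
    exacts [hS h, hT h]
  set ι : 𝓞 F →+* F := (algebraMap (𝓞 F) F : 𝓞 F →+* F) with hι
  set g : ℕ := ∏ p ∈ S ∩ T, p with hg
  set mΔ : ℕ := ∏ p ∈ S ∆ T, p with hmΔ
  have hgne : g ≠ 0 := Finset.prod_ne_zero_iff.mpr
    (fun p hp => hP0 p (hS (Finset.mem_of_mem_inter_left hp)))
  have hgF : ((g : ℕ) : F) ≠ 0 := Nat.cast_ne_zero.mpr hgne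
  have hids : (∏ p ∈ S, p) * (∏ p ∈ T, p) = g ^ 2 * mΔ := prod_mul_prod_symmDiff S T _
  have hmm : ((∏ p ∈ S, p : ℕ) : 𝓞 F) * ((∏ p ∈ T, p : ℕ) : 𝓞 F)
      = ((g : ℕ) : 𝓞 F) ^ 2 * ((mΔ : ℕ) : 𝓞 F) := by
    exact_mod_cast congrArg (Nat.cast : ℕ → 𝓞 F) hids
  have hυ : (uS : 𝓞 F) = (uT : 𝓞 F) * w * w := by rw [hw]; simp
  have hO : (βS * βT) ^ 2 = (((uT : 𝓞 F) * w) * (g : 𝓞 F)) ^ 2 * ((mΔ : ℕ) : 𝓞 F) := by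
    calc (βS * βT) ^ 2 = βS ^ 2 * βT ^ 2 := by ring
    _ = ((uS : 𝓞 F) * ((∏ p ∈ S, p : ℕ) : 𝓞 F)) * ((uT : 𝓞 F) * ((∏ p ∈ T, p : ℕ) : 𝓞 F)) := by
        rw [hβS, hβT]
    _ = ((uT : 𝓞 F) * w) ^ 2 * (((∏ p ∈ S, p : ℕ) : 𝓞 F) * ((∏ p ∈ T, p : ℕ) : 𝓞 F)) := by
        rw [hυ]; ring
    _ = _ := by rw [hmm]; ring
  set d : F := ι ((uT : 𝓞 F) * (w : 𝓞 F)) with hd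
  have hd0 : d ≠ 0 := by
    have : IsUnit d := (uT.isUnit.mul w.isUnit).map ι
    exact this.ne_zero
  have hdg0 : d * (g : F) ≠ 0 := mul_ne_zero hd0 hgF
  set x : F := ι (βS * βT) / (d * (g : F)) with hx
  have hxsq : x ^ 2 = ((mΔ : ℕ) : F) := by
    rw [hx, div_pow, ← map_pow, hO]
    rw [map_mul, map_pow, map_mul, map_natCast, map_natCast]
    rw [← hd]
    field_simp
  rcases quad_sq_rat hdeg hα hni x mΔ hxsq with ⟨q, hq⟩ | ⟨q, hq⟩
  · left
    have hmΔ1 : mΔ = 1 := by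
      apply sf_rat_square_eq_one
      · exact hsq.squarefree_of_dvd (by
          rw [← Nat.prod_primeFactors_of_squarefree hsq]
          exact Finset.prod_dvd_prod_of_subset _ _ _ hSd)
      · exact ⟨q, by rw [← hq]; ring⟩
    have hempty : S ∆ T = ∅ := by
      rw [Finset.eq_empty_iff_forall_notMem]
      intro p hp
      have hdvd : p ∣ mΔ := Finset.dvd_prod_of_mem _ hp
      rw [hmΔ1, Nat.dvd_one] at hdvd
      exact (Nat.prime_of_mem_primeFactors (hSd hp)).one_lt.ne' hdvd
    rwa [← Finset.bot_eq_empty, symmDiff_eq_bot] at hempty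
  · right
    have hmΔz : mΔ = z := by
      apply sf_div_rat_sq hsq hz0 ?_ q hq
      rw [← Nat.prod_primeFactors_of_squarefree hsq]
      exact Finset.prod_dvd_prod_of_subset _ _ _ hSd
    apply le_antisymm hSd
    intro p hp
    have hpp := Nat.prime_of_mem_primeFactors hp
    have hpz : p ∣ mΔ := by rw [hmΔz]; exact Nat.dvd_of_mem_primeFactors hp
    rw [hmΔ] at hpz
    obtain ⟨a, ha, hpa⟩ := (Nat.Prime.prime hpp).dvd_finset_prod_iff _ |>.mp hpz
    have hap := Nat.prime_of_mem_primeFactors (hSd ha)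
    rwa [(Nat.prime_dvd_prime_iff_eq hpp hap).mp hpa]

/-! ### Bounding the kernel -/

lemma Kbound {z : ℕ} (hz0 : 0 < z) (hsq : Squarefree z) (hdeg : Module.finrank ℚ F = 2)
    {α : F} (hα : α ^ 2 = z) (hni : ∀ q : ℚ, algebraMap ℚ F q ≠ α)
    (α₀ : 𝓞 F) (hα₀ : algebraMap (𝓞 F) F α₀ = α) (φ : F →+* ℝ)
    (K : Finset (Finset ℕ))
    (hKmem : ∀ S, S ∈ K ↔ S ⊆ z.primeFactors ∧ fcl α₀ S = 1) :
    K.card ≤ 4 := by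
  classical
  have hspec : ∀ S ∈ K, ∃ u : (𝓞 F)ˣ,
      (∃ β : 𝓞 F, β ^ 2 = (u : 𝓞 F) * ((∏ p ∈ S, p : ℕ) : 𝓞 F)) ∧
      0 < φ (algebraMap (𝓞 F) F (u : 𝓞 F)) := by
    intro S hS
    obtain ⟨hS1, hS2⟩ := (hKmem S).mp hS
    obtain ⟨u, β, hβ⟩ := ker_unit hsq hα α₀ hα₀ hS1 hS2
    refine ⟨u, ⟨β, hβ⟩, ?_⟩
    have hm0 : (0:ℝ) < ((∏ p ∈ S, p : ℕ) : ℝ) := by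
      have hne : (∏ p ∈ S, p) ≠ 0 := Finset.prod_ne_zero_iff.mpr
        fun p hp => (Nat.prime_of_mem_primeFactors (hS1 hp)).ne_zero
      exact_mod_cast Nat.pos_of_ne_zero hne
    have hβval : φ (algebraMap (𝓞 F) F β) ^ 2
        = φ (algebraMap (𝓞 F) F (u : 𝓞 F)) * ((∏ p ∈ S, p : ℕ) : ℝ) := by
      have h1 := congrArg (fun t : 𝓞 F => φ (algebraMap (𝓞 F) F t)) hβ
      simpa only [map_pow, map_mul, map_natCast] using h1
    have hu0 : φ (algebraMap (𝓞 F) F (u : 𝓞 F)) ≠ 0 := by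
      intro h0
      have h1 : ((u : 𝓞 F) : F) ≠ 0 := by
        simpa using (u.isUnit.map (algebraMap (𝓞 F) F)).ne_zero
      exact h1 (φ.injective (by rwa [map_zero]))
    rcases hu0.lt_or_gt with hneg | hpos
    · exfalso
      nlinarith [sq_nonneg (φ (algebraMap (𝓞 F) F β))]
    · exact hpos
  choose! u hu hupos using hspec
  set sqg : Subgroup (𝓞 F)ˣ := (powMonoidHom 2 : (𝓞 F)ˣ →* (𝓞 F)ˣ).range with hsqg
  set σ : Finset ℕ → ((𝓞 F)ˣ ⧸ sqg) := fun S => QuotientGroup.mk (u S) with hσ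
  have hrel : ∀ S ∈ K, ∀ T ∈ K, σ S = σ T → (S = T ∨ S ∆ T = z.primeFactors) := by
    intro S hSK T hTK hst
    have h1 : (u S)⁻¹ * u T ∈ sqg := QuotientGroup.eq.mp hst
    obtain ⟨w, hw⟩ := h1
    rw [powMonoidHom_apply] at hw
    have hw' : u T = u S * w * w := by
      rw [mul_assoc, ← pow_two, hw]
      group
    obtain ⟨βT, hβT⟩ := hu T hTK
    obtain ⟨βS, hβS⟩ := hu S hSK
    rcases kernel_rel hz0 hsq hdeg hα hni ((hKmem T).mp hTK).1 ((hKmem S).mp hSK).1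
      hβT hβS hw' with h | h
    · exact Or.inl h.symm
    · exact Or.inr (by rwa [symmDiff_comm] at h)
  have hfib : ∀ b ∈ K.image σ, (K.filter (fun S => σ S = b)).card ≤ 2 := by
    intro b hb
    obtain ⟨S₀, hS₀K, hS₀b⟩ := Finset.mem_image.mp hb
    have hsub : K.filter (fun S => σ S = b) ⊆ {S₀, S₀ ∆ z.primeFactors} := by
      intro T hT
      rw [Finset.mem_filter] at hT
      rcases hrel S₀ hS₀K T hT.1 (by rw [hS₀b, hT.2]) with h | h
      · rw [← h]
        exact Finset.mem_insert_self _ _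
      · have : T = S₀ ∆ z.primeFactors := by
          rw [← h, symmDiff_symmDiff_cancel_left]
        rw [this]
        exact Finset.mem_insert_of_mem (Finset.mem_singleton_self _)
    calc (K.filter (fun S => σ S = b)).card ≤ ({S₀, S₀ ∆ z.primeFactors} : Finset _).card :=
          Finset.card_le_card hsub
    _ ≤ 2 := by
        apply le_trans (Finset.card_insert_le _ _)
        simp
  have himg : (K.image σ).card ≤ 2 := by
    have hsq_one : ∀ T : Finset ℕ, σ T * σ T = 1 := by
      intro T
      have : σ T * σ T = (QuotientGroup.mk (u T * u T) : (𝓞 F)ˣ ⧸ sqg) := rfl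
      rw [this, QuotientGroup.eq_one_iff]
      exact ⟨u T, by rw [powMonoidHom_apply, pow_two]⟩
    have hone : ∀ S ∈ K, ∀ T ∈ K, σ S ≠ 1 → σ T ≠ 1 → σ S = σ T := by
      intro S hS T hT hS1 hT1
      rcases unit_trichotomy hdeg φ (u S) (u T) (hupos S hS) (hupos T hT) with h | h | h
      · exfalso
        obtain ⟨r, hr⟩ := h
        exact hS1 ((QuotientGroup.eq_one_iff _).mpr ⟨r, by rw [powMonoidHom_apply, pow_two, ← hr]⟩)
      · exfalso
        obtain ⟨r, hr⟩ := h
        exact hT1 ((QuotientGroup.eq_one_iff _).mpr ⟨r, by rw [powMonoidHom_apply, pow_two, ← hr]⟩)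
      · obtain ⟨r, hr⟩ := h
        have hmul : σ S * σ T = 1 := by
          have h2 : σ S * σ T = (QuotientGroup.mk (u S * u T) : (𝓞 F)ˣ ⧸ sqg) := rfl
          rw [h2, QuotientGroup.eq_one_iff]
          exact ⟨r, by rw [powMonoidHom_apply, pow_two, ← hr]⟩
        calc σ S = σ S * (σ T * σ T) := by rw [hsq_one T, mul_one]
        _ = (σ S * σ T) * σ T := by rw [mul_assoc]
        _ = σ T := by rw [hmul, one_mul]
    by_cases hex : ∃ S₀ ∈ K, σ S₀ ≠ 1
    · obtain ⟨S₀, hS₀, hS₀1⟩ := hex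
      have hsub : K.image σ ⊆ {1, σ S₀} := by
        intro b hb
        obtain ⟨T, hT, rfl⟩ := Finset.mem_image.mp hb
        by_cases hT1 : σ T = 1
        · rw [hT1]; exact Finset.mem_insert_self _ _
        · rw [hone T hT S₀ hS₀ hT1 hS₀1]
          exact Finset.mem_insert_of_mem (Finset.mem_singleton_self _)
      calc (K.image σ).card ≤ ({1, σ S₀} : Finset _).card := Finset.card_le_card hsub
      _ ≤ 2 := by
          apply le_trans (Finset.card_insert_le _ _)
          simp
    · push_neg at hex
      have hsub : K.image σ ⊆ {1} := by
        intro b hb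
        obtain ⟨T, hT, rfl⟩ := Finset.mem_image.mp hb
        rw [hex T hT]
        exact Finset.mem_singleton_self _
      calc (K.image σ).card ≤ 1 := by
            simpa using Finset.card_le_card hsub
      _ ≤ 2 := by norm_num
  calc K.card ≤ 2 * (K.image σ).card := Finset.card_le_mul_card_image K 2 hfib
  _ ≤ 2 * 2 := by omega
  _ = 4 := rfl

end Kernel

/-- If `z` is a square-free positive integer with at least `s + 2` distinct prime
divisors, then `2 ^ s` divides the class number of the real quadratic field `ℚ(√z)`. -/
theorem two_pow_dvd_classNumber_real_quad (z s : ℕ) (hz : 0 < z) (hsq : Squarefree z)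
    (hfac : s + 2 ≤ z.primeFactors.card)
    (F : Type) [Field F] [NumberField F] (hdeg : Module.finrank ℚ F = 2)
    (hgen : ∃ α : F, α ^ 2 = (z : F)) :
    2 ^ s ∣ NumberField.classNumber F := by
  classical
  obtain ⟨α, hα⟩ := hgen
  have hz1 : z ≠ 1 := by rintro rfl; simp at hfac
  have hni : ∀ q : ℚ, algebraMap ℚ F q ≠ α := by
    intro q hq
    have hq2 : q ^ 2 = (z : ℚ) := by
      apply (algebraMap ℚ F).injective
      rw [map_pow, hq, hα, map_natCast]
    exact hz1 (sf_rat_square_eq_one hsq ⟨q, by rw [← hq2]; ring⟩)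
  set α₀ : 𝓞 F := ⟨α, alpha_integral hα⟩ with hα₀def
  have hα₀ : algebraMap (𝓞 F) F α₀ = α := rfl
  obtain ⟨φ⟩ := exists_real_embedding hz hα (quad_decomp hdeg hni)
  set P : Finset ℕ := z.primeFactors with hP
  set K : Finset (Finset ℕ) := P.powerset.filter (fun S => fcl α₀ S = 1) with hK
  have hKmem : ∀ S, S ∈ K ↔ S ⊆ P ∧ fcl α₀ S = 1 := by
    intro S
    rw [hK, Finset.mem_filter, Finset.mem_powerset]
  have hK4 : K.card ≤ 4 := Kbound hz hsq hdeg hα hni α₀ hα₀ φ K hKmem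
  set img : Finset (ClassGroup (𝓞 F)) := P.powerset.image (fcl α₀) with himg
  have hcount : 2 ^ P.card ≤ 4 * img.card := by
    rw [← Finset.card_powerset]
    apply Finset.card_le_mul_card_image
    intro b hb
    obtain ⟨S₀, hS₀, hS₀b⟩ := Finset.mem_image.mp hb
    rw [Finset.mem_powerset] at hS₀
    have hfib : (P.powerset.filter (fun S => fcl α₀ S = b)).card ≤ K.card := by
      apply Finset.card_le_card_of_injOn (fun T => S₀ ∆ T)
      · intro T hT
        rw [Finset.mem_coe, Finset.mem_filter, Finset.mem_powerset] at hT
        rw [Finset.mem_coe, hKmem]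
        constructor
        · intro p hp
          rcases Finset.mem_symmDiff.mp hp with ⟨h, _⟩ | ⟨h, _⟩
          exacts [hS₀ h, hT.1 h]
        · rw [← fcl_mul hsq hα α₀ hα₀ hS₀ hT.1, hT.2, hS₀b]
          rw [← hS₀b, fcl_mul hsq hα α₀ hα₀ hS₀ hS₀, symmDiff_self, Finset.bot_eq_empty,
            fcl_empty]
      · intro a _ b' _ hab
        have := congrArg (fun X => S₀ ∆ X) hab
        simpa [symmDiff_symmDiff_cancel_left] using this
    exact le_trans hfib hK4
  have h2s : 2 ^ s ≤ img.card := by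
    have h1 : 2 ^ (s + 2) ≤ 2 ^ P.card := Nat.pow_le_pow_right (by norm_num) hfac
    have h2 : 2 ^ (s + 2) = 2 ^ s * 4 := by ring
    omega
  set H : Subgroup (ClassGroup (𝓞 F)) := Subgroup.closure (↑img) with hH
  have hsq1 : ∀ x ∈ H, x * x = 1 := by
    intro x hx
    refine Subgroup.closure_induction ?_ ?_ ?_ ?_ hx
    · intro b hb
      obtain ⟨S, hS, rfl⟩ := Finset.mem_image.mp (by exact_mod_cast hb)
      rw [Finset.mem_powerset] at hS
      rw [fcl_mul hsq hα α₀ hα₀ hS hS, symmDiff_self, Finset.bot_eq_empty, fcl_empty]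
    · rw [one_mul]
    · intro a b _ _ ha hb
      rw [mul_mul_mul_comm, ha, hb, one_mul]
    · intro a _ ha
      rw [← mul_inv, ha, inv_one]
  have hn0 : Nat.card H ≠ 0 := Nat.card_pos.ne'
  have hprimes : ∀ q : ℕ, q.Prime → q ∣ Nat.card H → q = 2 := by
    intro q hq hd
    haveI := Fact.mk hq
    rw [Nat.card_eq_fintype_card] at hd
    obtain ⟨x, hx⟩ := exists_prime_orderOf_dvd_card (G := H) q hd
    have hxx : x * x = 1 := Subtype.ext (hsq1 (x : ClassGroup (𝓞 F)) x.2)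
    have hx2 : x ^ 2 = 1 := by rw [pow_two]; exact hxx
    have hdvd := orderOf_dvd_of_pow_eq_one hx2
    rw [hx] at hdvd
    exact (Nat.prime_dvd_prime_iff_eq hq Nat.prime_two).mp hdvd
  obtain ⟨k, hk⟩ := eq_two_pow _ hn0 hprimes
  have h3 : img.card ≤ Nat.card H := by
    rw [← Set.ncard_coe_finset]
    have hsub : (↑img : Set (ClassGroup (𝓞 F))) ⊆ (H : Set _) :=
      fun b hb => Subgroup.subset_closure hb
    calc (↑img : Set (ClassGroup (𝓞 F))).ncard ≤ (H : Set _).ncard :=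
          Set.ncard_le_ncard hsub (Set.toFinite _)
    _ = Nat.card H := by rw [← Nat.card_coe_set_eq]; rfl
  have hsk : s ≤ k := by
    have : (2:ℕ) ^ s ≤ 2 ^ k := by omega
    exact (Nat.pow_le_pow_iff_right one_lt_two).mp this
  have hdvd1 : (2:ℕ) ^ s ∣ 2 ^ k := pow_dvd_pow 2 hsk
  have hdvd2 : Nat.card H ∣ Nat.card (ClassGroup (𝓞 F)) := Subgroup.card_subgroup_dvd_card H
  rw [hk] at hdvd2
  have : NumberField.classNumber F = Nat.card (ClassGroup (𝓞 F)) := by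
    rw [NumberField.classNumber, Nat.card_eq_fintype_card]
  rw [this]
  exact dvd_trans hdvd1 hdvd2
end

section
/- Let F = ℚ(√z) be a real quadratic field, where z is a square-free positive integer with exactly s+1 distinct prime divisors and z ≡ 3 (mod 4). Then 2^s divides the class number of F. -/
open NumberField NumberField.Units Module Ideal
open scoped nonZeroDivisors

section AuxLemmas

lemma aux_rat_sq_nat (q : ℚ) (n : ℕ) (h : q ^ 2 = (n : ℚ)) : ∃ m : ℕ, n = m ^ 2 := by
  have hint : IsIntegral ℤ q := by
    refine ⟨Polynomial.X ^ 2 - Polynomial.C (n : ℤ), Polynomial.monic_X_pow_sub_C _ (by norm_num), ?_⟩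
    simp [h]
  obtain ⟨y, hy⟩ := IsIntegrallyClosed.isIntegral_iff.mp hint
  have hyq : (y : ℚ) = q := by exact_mod_cast hy
  have h2 : y ^ 2 = (n : ℤ) := by
    have : (y : ℚ) ^ 2 = (n : ℚ) := by rw [hyq, h]
    exact_mod_cast this
  refine ⟨y.natAbs, ?_⟩
  have h3 := congrArg Int.natAbs h2
  simpa [Int.natAbs_pow] using h3.symm

lemma aux_sq_squarefree (n : ℕ) (hsf : Squarefree n) (m : ℕ) (h : n = m ^ 2) : n = 1 := by
  have h1 : m * m ∣ n := by rw [h]; exact ⟨1, by ring⟩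
  have h2 := hsf m h1
  rw [Nat.isUnit_iff] at h2
  subst h2; simpa using h

lemma aux_mul_sq (z d : ℕ) (hz : Squarefree z) (hd : Squarefree d) (hzpos : 0 < z)
    (hdpos : 0 < d) (m : ℕ) (h : z * d = m ^ 2) : z = d := by
  refine Nat.eq_of_factorization_eq hzpos.ne' hdpos.ne' fun p => ?_
  have h1 := (Nat.squarefree_iff_factorization_le_one hzpos.ne').mp hz p
  have h2 := (Nat.squarefree_iff_factorization_le_one hdpos.ne').mp hd p
  have h3 : z.factorization p + d.factorization p = 2 * m.factorization p := by
    have := congrArg (fun k => Nat.factorization k p) h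
    simpa [Nat.factorization_mul hzpos.ne' hdpos.ne', Nat.factorization_pow] using this
  omega

lemma aux_li (z : ℕ) (hsq : Squarefree z) (hz1 : z ≠ 1)
    (F : Type) [Field F] [Algebra ℚ F] (α : F) (hα : α ^ 2 = (z : F)) :
    LinearIndependent ℚ ![1, α] := by
  rw [LinearIndependent.pair_iff]
  intro a b hab
  rw [Algebra.smul_def, Algebra.smul_def, mul_one] at hab
  by_cases hb : b = 0
  · subst hb
    simp only [map_zero, zero_mul, add_zero] at hab
    exact ⟨(algebraMap ℚ F).injective (by simpa using hab), rfl⟩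
  · exfalso
    have key : a ^ 2 = b ^ 2 * z := by
      apply (algebraMap ℚ F).injective
      have h1 : (algebraMap ℚ F) a = -((algebraMap ℚ F) b * α) :=
        eq_neg_of_add_eq_zero_left hab
      rw [map_pow, h1]
      push_cast
      rw [neg_pow, mul_pow, hα]
      ring
    have hq : (a/b : ℚ) ^ 2 = (z : ℚ) := by
      field_simp
      linarith [key]
    obtain ⟨m, hm⟩ := aux_rat_sq_nat _ _ hq
    exact hz1 (aux_sq_squarefree z hsq m hm)

lemma aux_key_sq (z : ℕ) (F : Type) [Field F] [Algebra ℚ F]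
    (hdeg : Module.finrank ℚ F = 2) (α : F) (hα : α ^ 2 = (z : F))
    (hli : LinearIndependent ℚ ![1, α])
    (γ : F) (q : ℚ) (h : γ ^ 2 = algebraMap ℚ F q) :
    (∃ x : ℚ, q = x ^ 2) ∨ (∃ y : ℚ, q = z * y ^ 2) := by
  have : FiniteDimensional ℚ F := Module.finite_of_finrank_eq_succ hdeg
  let B : Basis (Fin 2) ℚ F :=
    basisOfLinearIndependentOfCardEqFinrank hli (by simp [hdeg])
  have hB : ∀ i, B i = ![1, α] i := fun i => by
    rw [coe_basisOfLinearIndependentOfCardEqFinrank]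
  set x := B.repr γ 0 with hx
  set y := B.repr γ 1 with hy
  have hγ : γ = algebraMap ℚ F x + algebraMap ℚ F y * α := by
    have := B.sum_repr γ
    rw [Fin.sum_univ_two, hB 0, hB 1] at this
    simp only [Matrix.cons_val_zero, Matrix.cons_val_one, Matrix.head_cons] at this
    rw [← this, Algebra.smul_def, Algebra.smul_def, mul_one]
  have hsq : algebraMap ℚ F (x^2 + y^2*z - q) + algebraMap ℚ F (2*x*y) * α = 0 := by
    have : γ ^ 2 = algebraMap ℚ F (x^2 + y^2*z) + algebraMap ℚ F (2*x*y) * α := by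
      rw [hγ]
      simp only [map_add, _root_.map_mul, map_pow, map_ofNat, map_natCast]
      linear_combination ((algebraMap ℚ F) y)^2 * hα
    rw [h] at this
    push_cast at this ⊢
    linear_combination -this
  have hpair := LinearIndependent.pair_iff.mp hli (x^2 + y^2*z - q) (2*x*y) ?_
  · have h1 : x^2 + y^2*z - q = 0 := hpair.1
    have h2 : (2:ℚ)*x*y = 0 := hpair.2
    have hxy : x = 0 ∨ y = 0 := by
      rcases mul_eq_zero.mp h2 with h | h
      · rcases mul_eq_zero.mp h with h | h
        · norm_num at h
        · exact Or.inl h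
      · exact Or.inr h
    rcases hxy with rfl0 | rfl0
    · right; refine ⟨y, ?_⟩; rw [rfl0] at h1; linarith
    · left; refine ⟨x, ?_⟩; rw [rfl0] at h1; linarith
  · rw [Algebra.smul_def, Algebra.smul_def, mul_one]
    exact hsq

lemma aux_ideal_sq_odd (R : Type*) [CommRing R] (z : ℕ) (a : R) (haz : a ^ 2 = (z : R))
    (p q : ℕ) (hpq : p * q = z) (u v : ℤ) (huv : u * p + v * q = 1) :
    (Ideal.span {(p : R), a}) ^ 2 = Ideal.span {(p : R)} := by
  have hz : (p : R) * (q : R) = a * a := by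
    rw [← sq, haz, ← hpq]; push_cast; ring
  rw [sq]
  apply le_antisymm
  · apply Ideal.mul_le.mpr
    intro r hr s hs
    rw [Ideal.mem_span_pair] at hr hs
    obtain ⟨c, d, rfl⟩ := hr
    obtain ⟨e, f, rfl⟩ := hs
    rw [Ideal.mem_span_singleton']
    refine ⟨c * e * p + c * f * a + d * e * a + d * f * q, ?_⟩
    linear_combination (d * f : R) * hz
  · rw [Ideal.span_le, Set.singleton_subset_iff]
    have h1 : (p : R) * (p : R) ∈ Ideal.span {(p : R), a} * Ideal.span {(p : R), a} :=
      Ideal.mul_mem_mul (Ideal.subset_span (by simp)) (Ideal.subset_span (by simp))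
    have h2 : a * a ∈ Ideal.span {(p : R), a} * Ideal.span {(p : R), a} :=
      Ideal.mul_mem_mul (Ideal.subset_span (by simp)) (Ideal.subset_span (by simp))
    have key : (p : R) = (u : R) * ((p : R) * (p : R)) + (v : R) * (a * a) := by
      have h0 : (u * p + v * q) * p = (p : ℤ) := by rw [huv]; ring
      have h0' := congrArg (fun t : ℤ => (t : R)) h0
      push_cast at h0'
      linear_combination -h0' + (v : R) * hz
    have hmem := Ideal.add_mem _ (Ideal.mul_mem_left _ (u : R) h1) (Ideal.mul_mem_left _ (v : R) h2)
    rwa [← key] at hmem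

lemma aux_ideal_sq_two (R : Type*) [CommRing R] (z : ℕ) (a : R) (haz : a ^ 2 = (z : R))
    (k : ℕ) (hk : z + 1 = 4 * k) (u v : ℤ) (huv : u * (1 - 2 * (k:ℤ)) + v * 2 = 1) :
    (Ideal.span {(2 : R), 1 + a}) ^ 2 = Ideal.span {(2 : R)} := by
  have hzk : ((z : R) + 1) = 4 * k := by exact_mod_cast congrArg (fun t : ℕ => (t : R)) hk
  have hz : (1 + a) * (1 + a) = 4 * k + 2 * a := by
    linear_combination haz + hzk
  rw [sq]
  apply le_antisymm
  · apply Ideal.mul_le.mpr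
    intro r hr s hs
    rw [Ideal.mem_span_pair] at hr hs
    obtain ⟨c, d, rfl⟩ := hr
    obtain ⟨e, f, rfl⟩ := hs
    rw [Ideal.mem_span_singleton']
    refine ⟨c * e * 2 + c * f * (1 + a) + d * e * (1 + a) + d * f * (2 * (k:R) + a), ?_⟩
    linear_combination (d * f : R) * hz - 2 * (d*f : R) * haz - 2 * (d*f:R) * hzk
  · rw [Ideal.span_le, Set.singleton_subset_iff]
    have h1 : (2 : R) * (2 : R) ∈ Ideal.span {(2 : R), 1 + a} * Ideal.span {(2 : R), 1 + a} :=
      Ideal.mul_mem_mul (Ideal.subset_span (by simp)) (Ideal.subset_span (by simp))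
    have h2 : (1 + a) * (1 + a) ∈ Ideal.span {(2 : R), 1 + a} * Ideal.span {(2 : R), 1 + a} :=
      Ideal.mul_mem_mul (Ideal.subset_span (by simp)) (Ideal.subset_span (by simp))
    have h3 : (2 : R) * (1 + a) ∈ Ideal.span {(2 : R), 1 + a} * Ideal.span {(2 : R), 1 + a} :=
      Ideal.mul_mem_mul (Ideal.subset_span (by simp)) (Ideal.subset_span (by simp))
    have key : (2 : R) = (u : R) * ((2:R) * (1 + a) - (1+a)*(1+a)) + (v : R) * ((2:R) * (2:R)) := by
      have h0' := congrArg (fun t : ℤ => (t : R)) huv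
      push_cast at h0'
      linear_combination (u : R) * hz - 2 * h0'
    have hmem := Ideal.add_mem _ (Ideal.mul_mem_left _ (u : R) (Ideal.sub_mem _ h3 h2))
      (Ideal.mul_mem_left _ (v : R) h1)
    rwa [← key] at hmem

lemma aux_zpow_split {G : Type*} [CommGroup G] (x : G) (n : ℤ) :
    x ^ n = x ^ (((n : ZMod 2)).val) * (x ^ ((n - ((n : ZMod 2)).val) / 2)) ^ 2 := by
  have hdvd : (2:ℤ) ∣ (n - ((n : ZMod 2)).val) := by
    have : ((n - ((n : ZMod 2)).val : ℤ) : ZMod 2) = 0 := by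
      push_cast
      simp [ZMod.natCast_val, ZMod.intCast_cast]
    exact (ZMod.intCast_zmod_eq_zero_iff_dvd _ 2).mp this
  have key : (x ^ ((n - ((n : ZMod 2)).val) / 2)) ^ (2:ℕ) = x ^ (n - ((n : ZMod 2)).val) := by
    rw [← zpow_natCast (x ^ ((n - ((n : ZMod 2)).val) / 2)) 2, ← zpow_mul]
    push_cast
    rw [Int.ediv_mul_cancel hdvd]
  rw [key, ← zpow_natCast x (((n : ZMod 2)).val), ← zpow_add]
  congr 1
  ring

lemma aux_rank_le (F : Type) [Field F] [NumberField F] (hdeg : Module.finrank ℚ F = 2) :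
    rank F ≤ 1 := by
  have h1 := InfinitePlace.card_add_two_mul_card_eq_rank F
  rw [hdeg] at h1
  have h2 := InfinitePlace.card_eq_nrRealPlaces_add_nrComplexPlaces F
  unfold rank
  omega

lemma aux_card_units_sq (F : Type) [Field F] [NumberField F] (hdeg : Module.finrank ℚ F = 2) :
    Finite ((𝓞 F)ˣ ⧸ (powMonoidHom 2 : (𝓞 F)ˣ →* (𝓞 F)ˣ).range) ∧
    Nat.card ((𝓞 F)ˣ ⧸ (powMonoidHom 2 : (𝓞 F)ˣ →* (𝓞 F)ˣ).range) ≤ 4 := by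
  obtain ⟨g, hg⟩ := IsCyclic.exists_generator (α := torsion F)
  set sq := (powMonoidHom 2 : (𝓞 F)ˣ →* (𝓞 F)ˣ).range with hsqdef
  have hrank : (2:ℕ) ^ (rank F) ≤ 2 ^ 1 := Nat.pow_le_pow_right (by norm_num) (aux_rank_le F hdeg)
  let f : (ZMod 2 × (Fin (rank F) → ZMod 2)) → (𝓞 F)ˣ ⧸ sq := fun en =>
    QuotientGroup.mk ((g : (𝓞 F)ˣ) ^ (en.1.val) * ∏ i, fundSystem F i ^ ((en.2 i).val))
  have hsurj : Function.Surjective f := by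
    intro c
    obtain ⟨u, rfl⟩ := QuotientGroup.mk_surjective c
    obtain ⟨⟨ζ, e⟩, hue, -⟩ := exist_unique_eq_mul_prod F u
    obtain ⟨m, hm⟩ := hg ζ
    refine ⟨⟨(m : ZMod 2), fun i => (e i : ZMod 2)⟩, ?_⟩
    simp only [f]
    rw [QuotientGroup.eq]
    set A := (g : (𝓞 F)ˣ) ^ ((m - ((m : ZMod 2)).val) / 2) with hA
    set B := ∏ i, fundSystem F i ^ ((e i - ((e i : ZMod 2)).val) / 2) with hB
    set t := (g : (𝓞 F)ˣ) ^ (((m : ZMod 2)).val) * ∏ i, fundSystem F i ^ (((e i : ZMod 2)).val)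
      with ht
    have hu : u = t * (A * B) ^ 2 := by
      have hζ : (ζ : (𝓞 F)ˣ) = (g : (𝓞 F)ˣ) ^ m := by rw [← hm]; norm_cast
      calc u = (g : (𝓞 F)ˣ) ^ m * ∏ i, fundSystem F i ^ (e i) := by rw [hue, hζ]
        _ = ((g : (𝓞 F)ˣ) ^ (((m : ZMod 2)).val) * A ^ 2) *
            ∏ i, (fundSystem F i ^ (((e i : ZMod 2)).val) *
              (fundSystem F i ^ ((e i - ((e i : ZMod 2)).val) / 2)) ^ 2) := by
          rw [← aux_zpow_split]
          congr 1
          exact Finset.prod_congr rfl fun i _ => aux_zpow_split _ _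
        _ = t * (A * B) ^ 2 := by
          rw [Finset.prod_mul_distrib, Finset.prod_pow, ht, hA, hB, mul_pow]
          simp only [mul_comm, mul_assoc, mul_left_comm]
    refine ⟨A * B, ?_⟩
    simp only [powMonoidHom_apply]
    rw [hu]
    group
  have hfin : Finite ((𝓞 F)ˣ ⧸ sq) := Finite.of_surjective f hsurj
  refine ⟨hfin, ?_⟩
  calc Nat.card ((𝓞 F)ˣ ⧸ sq) ≤ Nat.card (ZMod 2 × (Fin (rank F) → ZMod 2)) :=
        Nat.card_le_card_of_surjective f hsurj
    _ = 2 * 2 ^ (rank F) := by simp [Nat.card_eq_fintype_card]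
    _ ≤ 4 := by omega

lemma aux_subgroup_card {Q : Type*} [Group Q] [Finite Q] (H : Subgroup Q)
    (hne : H ≠ ⊤) (hQ : Nat.card Q ≤ 4) : Nat.card H ≤ 2 := by
  have hdvd := Subgroup.card_subgroup_dvd_card H
  have hne' : Nat.card H ≠ Nat.card Q := fun h => hne (Subgroup.eq_top_of_card_eq H h)
  have hQpos : 0 < Nat.card Q := Nat.card_pos
  obtain ⟨c, hc⟩ := hdvd
  rcases Nat.lt_or_ge c 2 with h | h
  · interval_cases c <;> omega
  · have : Nat.card H ≤ Nat.card Q / 2 := by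
      rw [hc]
      calc Nat.card H ≤ Nat.card H * c / 2 := by
            rw [Nat.le_div_iff_mul_le (by norm_num)]
            exact Nat.mul_le_mul_left _ h
        _ = _ := rfl
    omega

lemma aux_final_arith (s cr ck n : ℕ) (h : cr * ck = 2 ^ (s + 2)) (hck : ck ≤ 4)
    (hdvd : cr ∣ n) : 2 ^ s ∣ n := by
  have hcr : cr ∣ 2 ^ (s + 2) := ⟨ck, h.symm⟩
  obtain ⟨j, hj, rfl⟩ := (Nat.dvd_prime_pow Nat.prime_two).mp hcr
  refine dvd_trans ?_ hdvd
  refine pow_dvd_pow 2 ?_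
  by_contra hjs
  push_neg at hjs
  have h1 : ck = 2 ^ (s + 2 - j) := by
    have h2 : (2:ℕ) ^ j * ck = 2 ^ j * 2 ^ (s + 2 - j) := by
      rw [h, ← pow_add]
      congr 1
      omega
    exact Nat.eq_of_mul_eq_mul_left (by positivity) h2
  have h3 : s + 2 - j ≥ 3 := by omega
  have h4 : (2:ℕ) ^ 3 ≤ 2 ^ (s + 2 - j) := Nat.pow_le_pow_right (by norm_num) h3
  omega

lemma aux_zmod2_val (x y : ZMod 2) : x.val + y.val = (x+y).val + 2 * (x.val * y.val) := by
  revert x y; decide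

end AuxLemmas

/-- If `z` is a square-free positive integer with exactly `s + 1` distinct prime
divisors and `z ≡ 3 (mod 4)`, then `2 ^ s` divides the class number of `ℚ(√z)`. -/
theorem two_pow_dvd_classNumber_real_quad_three_mod_four (z s : ℕ) (hz : 0 < z)
    (hsq : Squarefree z) (hfac : z.primeFactors.card = s + 1) (hmod : z % 4 = 3)
    (F : Type) [Field F] [NumberField F] (hdeg : Module.finrank ℚ F = 2)
    (hgen : ∃ α : F, α ^ 2 = (z : F)) :
    2 ^ s ∣ NumberField.classNumber F := by
  classical
  obtain ⟨α, hα⟩ := hgen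
  have hz1 : z ≠ 1 := by omega
  have hli := aux_li z hsq hz1 F α hα
  -- the integer √z
  have hint : IsIntegral ℤ α := by
    refine ⟨Polynomial.X ^ 2 - Polynomial.C (z : ℤ), Polynomial.monic_X_pow_sub_C _ (by norm_num), ?_⟩
    simp [hα]
  let a : 𝓞 F := ⟨α, hint⟩
  have ha : (a : F) = α := rfl
  have haz : a ^ 2 = ((z : ℕ) : 𝓞 F) := by
    ext
    push_cast [ha]
    exact hα
  -- the set of ramified primes
  set P : Finset ℕ := insert 2 z.primeFactors with hP
  have h2P : (2:ℕ) ∉ z.primeFactors := by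
    intro h
    obtain ⟨c, hc⟩ := Nat.dvd_of_mem_primeFactors h
    omega
  have hPcard : P.card = s + 2 := by
    rw [hP, Finset.card_insert_of_notMem h2P, hfac]
  have hPprime : ∀ p ∈ P, Nat.Prime p := by
    intro p hp
    rcases Finset.mem_insert.mp hp with h | h
    · rw [h]; exact Nat.prime_two
    · exact Nat.prime_of_mem_primeFactors h
  -- the ideals
  let Ip : {p : ℕ // p ∈ P} → Ideal (𝓞 F) := fun p =>
    Ideal.span {((p : ℕ) : 𝓞 F), if (p : ℕ) = 2 then 1 + a else a}
  have hIpsq : ∀ p, Ip p ^ 2 = Ideal.span {((p : ℕ) : 𝓞 F)} := by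
    rintro ⟨p, hp⟩
    by_cases hp2 : p = 2
    · subst hp2
      have hk : z + 1 = 4 * ((z+1)/4) := by omega
      have := aux_ideal_sq_two (𝓞 F) z a haz ((z+1)/4) hk (-1) (1 - ((z+1)/4 : ℤ))
        (by push_cast; ring)
      simp only [Ip, if_pos rfl]
      rw [show ((2:ℕ) : 𝓞 F) = (2 : 𝓞 F) by push_cast; ring]
      exact this
    · have hpmem : p ∈ z.primeFactors := by
        rcases Finset.mem_insert.mp hp with h | h
        · exact absurd h hp2
        · exact h
      have hpprime : Nat.Prime p := Nat.prime_of_mem_primeFactors hpmem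
      have hpdvd : p ∣ z := Nat.dvd_of_mem_primeFactors hpmem
      have hpq : p * (z / p) = z := Nat.mul_div_cancel' hpdvd
      have hnd : ¬ p ∣ (z / p) := by
        intro hcon
        obtain ⟨c, hc⟩ := hcon
        have : p * p ∣ z := ⟨c, by rw [← hpq, hc]; ring⟩
        exact hpprime.not_isUnit (hsq p this)
      have hcop : Nat.Coprime p (z / p) := (Nat.Prime.coprime_iff_not_dvd hpprime).mpr hnd
      obtain ⟨u, v, huv⟩ := Nat.isCoprime_iff_coprime.mpr hcop
      simp only [Ip, if_neg hp2]
      exact aux_ideal_sq_odd (𝓞 F) z a haz p (z / p) hpq u v huv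
  -- the products
  let D : ({p : ℕ // p ∈ P} → ZMod 2) → ℕ := fun f => ∏ p : {p : ℕ // p ∈ P}, p.1 ^ ((f p).val)
  let If : ({p : ℕ // p ∈ P} → ZMod 2) → Ideal (𝓞 F) := fun f => ∏ p, (Ip p) ^ ((f p).val)
  have hDpos : ∀ f, 0 < D f := by
    intro f
    apply Finset.prod_pos
    intro p _
    exact pow_pos (hPprime p p.2).pos _
  have hIf_sq : ∀ f, (If f) ^ 2 = Ideal.span {((D f : ℕ) : 𝓞 F)} := by
    intro f
    have step : (If f) ^ 2 = ∏ p : {p : ℕ // p ∈ P}, Ideal.span {((p.1 ^ ((f p).val) : ℕ) : 𝓞 F)} := by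
      rw [← Finset.prod_pow]
      apply Finset.prod_congr rfl
      intro p _
      rw [← pow_mul, mul_comm ((f p).val) 2, pow_mul, hIpsq p, Ideal.span_singleton_pow]
      push_cast
      rfl
    rw [step, Ideal.prod_span_singleton]
    congr 1
    simp only [D]
    push_cast
    rfl
  have hIf_ne : ∀ f, If f ≠ 0 := by
    intro f hf
    have h0 : Ideal.span {((D f : ℕ) : 𝓞 F)} = ⊥ := by
      rw [← hIf_sq f, hf]
      simp [pow_two]
    rw [Ideal.span_singleton_eq_bot] at h0
    have hD0 : (D f : ℕ) ≠ 0 := (hDpos f).ne'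
    exact hD0 (by exact_mod_cast h0)
  have hIf_mem : ∀ f, If f ∈ (Ideal (𝓞 F))⁰ :=
    fun f => mem_nonZeroDivisors_iff_ne_zero.mpr (hIf_ne f)
  -- multiplicativity data
  let M : ({p : ℕ // p ∈ P} → ZMod 2) → ({p : ℕ // p ∈ P} → ZMod 2) → ℕ := fun f g =>
    ∏ p : {p : ℕ // p ∈ P}, p.1 ^ ((f p).val * (g p).val)
  have hMpos : ∀ f g, 0 < M f g := by
    intro f g
    apply Finset.prod_pos
    intro p _
    exact pow_pos (hPprime p p.2).pos _
  have hIf_mul : ∀ f g, If f * If g = If (f + g) * Ideal.span {((M f g : ℕ) : 𝓞 F)} := by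
    intro f g
    have hMcast : ((M f g : ℕ) : 𝓞 F) = ∏ p : {p : ℕ // p ∈ P}, ((p.1 ^ ((f p).val * (g p).val) : ℕ) : 𝓞 F) := by
      simp only [M]
      push_cast
      rfl
    rw [hMcast, ← Ideal.prod_span_singleton, ← Finset.prod_mul_distrib, ← Finset.prod_mul_distrib]
    apply Finset.prod_congr rfl
    intro p _
    rw [← pow_add]
    have hval : (f p).val + (g p).val = ((f + g) p).val + 2 * ((f p).val * (g p).val) := by
      have := aux_zmod2_val (f p) (g p)
      simp only [Pi.add_apply]
      omega
    rw [hval, pow_add, pow_mul, hIpsq p, Ideal.span_singleton_pow]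
    push_cast
    rfl
  have hD_mul : ∀ f g, D f * D g = D (f + g) * (M f g) ^ 2 := by
    intro f g
    simp only [D, M]
    rw [← Finset.prod_mul_distrib, ← Finset.prod_pow, ← Finset.prod_mul_distrib]
    apply Finset.prod_congr rfl
    intro p _
    rw [← pow_add, ← pow_mul, ← pow_add]
    congr 1
    have := aux_zmod2_val (f p) (g p)
    simp only [Pi.add_apply]
    omega
  -- the class group morphism
  let Φ : Multiplicative ({p : ℕ // p ∈ P} → ZMod 2) →* ClassGroup (𝓞 F) :=
    MonoidHom.mk' (fun f => ClassGroup.mk0 ⟨If f.toAdd, hIf_mem f.toAdd⟩) (by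
      intro f g
      have hMne : ((M f.toAdd g.toAdd : ℕ) : 𝓞 F) ≠ 0 :=
        Nat.cast_ne_zero.mpr (hMpos f.toAdd g.toAdd).ne'
      have hMId : Ideal.span {((M f.toAdd g.toAdd : ℕ) : 𝓞 F)} ∈ (Ideal (𝓞 F))⁰ := by
        refine mem_nonZeroDivisors_iff_ne_zero.mpr ?_
        rw [Ideal.zero_eq_bot, Ne, Ideal.span_singleton_eq_bot]
        exact hMne
      have key : (⟨If f.toAdd, hIf_mem f.toAdd⟩ * ⟨If g.toAdd, hIf_mem g.toAdd⟩ :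
          (Ideal (𝓞 F))⁰) =
          (⟨If (f.toAdd + g.toAdd), hIf_mem _⟩ : (Ideal (𝓞 F))⁰) *
          ⟨Ideal.span {((M f.toAdd g.toAdd : ℕ) : 𝓞 F)}, hMId⟩ := by
        apply Subtype.ext
        simpa using hIf_mul f.toAdd g.toAdd
      have h1 : ClassGroup.mk0 (⟨Ideal.span {((M f.toAdd g.toAdd : ℕ) : 𝓞 F)}, hMId⟩ :
          (Ideal (𝓞 F))⁰) = 1 :=
        (ClassGroup.mk0_eq_one_iff hMId).mpr ⟨⟨_, rfl⟩⟩
      calc ClassGroup.mk0 ⟨If (f*g).toAdd, hIf_mem _⟩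
          = ClassGroup.mk0 (⟨If (f.toAdd + g.toAdd), hIf_mem _⟩ : (Ideal (𝓞 F))⁰) := rfl
        _ = ClassGroup.mk0 ((⟨If (f.toAdd + g.toAdd), hIf_mem _⟩ : (Ideal (𝓞 F))⁰) *
              ⟨Ideal.span {((M f.toAdd g.toAdd : ℕ) : 𝓞 F)}, hMId⟩) := by
            rw [MonoidHom.map_mul ClassGroup.mk0, h1, mul_one]
        _ = ClassGroup.mk0 (⟨If f.toAdd, hIf_mem f.toAdd⟩ * ⟨If g.toAdd, hIf_mem g.toAdd⟩ :
              (Ideal (𝓞 F))⁰) := by rw [key]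
        _ = _ := by rw [MonoidHom.map_mul ClassGroup.mk0])
  -- cardinality bookkeeping
  have hG : Nat.card (Multiplicative ({p : ℕ // p ∈ P} → ZMod 2)) = 2 ^ (s + 2) := by
    simp only [Nat.card_eq_fintype_card]
    rw [Fintype.card_multiplicative, Fintype.card_fun, ZMod.card, Fintype.card_coe, hPcard]
  have hsplit : Nat.card Φ.range * Nat.card Φ.ker = 2 ^ (s + 2) := by
    rw [← hG, Subgroup.card_eq_card_quotient_mul_card_subgroup Φ.ker]
    congr 1
    exact (Nat.card_congr (QuotientGroup.quotientKerEquivRange Φ).toEquiv).symm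
  have hrange_dvd : Nat.card Φ.range ∣ NumberField.classNumber F := by
    rw [NumberField.classNumber, ← Nat.card_eq_fintype_card]
    exact Subgroup.card_subgroup_dvd_card _
  have hker4 : Nat.card Φ.ker ≤ 4 := by
    set sqU := (powMonoidHom 2 : (𝓞 F)ˣ →* (𝓞 F)ˣ).range with hsqU
    obtain ⟨hUfin, hUcard⟩ := aux_card_units_sq F hdeg
    have hvalinj : ∀ x y : ZMod 2, x.val = y.val → x = y := by decide
    let fT : Φ.ker → ({p : ℕ // p ∈ P} → ZMod 2) := fun t =>
      Multiplicative.toAdd (t : Multiplicative ({p : ℕ // p ∈ P} → ZMod 2))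
    -- generators of the principal ideals in the kernel
    have hprin : ∀ t : Φ.ker, ∃ β : 𝓞 F, If (fT t) = Ideal.span {β} := by
      intro t
      have h1 : ClassGroup.mk0 ⟨If (fT t), hIf_mem _⟩ = 1 := t.2
      obtain ⟨⟨β, hβ⟩⟩ := (ClassGroup.mk0_eq_one_iff _).mp h1
      exact ⟨β, hβ⟩
    choose gene hgene using hprin
    have hgene_ne : ∀ t, gene t ≠ 0 := by
      intro t h0
      apply hIf_ne (fT t)
      rw [hgene t, h0, Ideal.zero_eq_bot, Ideal.span_singleton_eq_bot]
    have hassoc : ∀ t : Φ.ker, ∃ u : (𝓞 F)ˣ,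
        (gene t) ^ 2 * u = ((D (fT t) : ℕ) : 𝓞 F) := by
      intro t
      have h1 : Ideal.span {(gene t) ^ 2} =
          Ideal.span {((D (fT t) : ℕ) : 𝓞 F)} := by
        rw [← Ideal.span_singleton_pow, ← hgene t, hIf_sq]
      exact Ideal.span_singleton_eq_span_singleton.mp h1
    choose ut hut using hassoc
    -- D f values are squarefree divisors of 2z
    have h2z_sf : Squarefree (2 * z) := by
      refine (Nat.squarefree_mul ?_).mpr ⟨Nat.prime_two.squarefree, hsq⟩
      rw [Nat.coprime_two_left]
      exact Nat.odd_iff.mpr (by omega)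
    have hDsf : ∀ f, Squarefree (D f) := by
      intro f
      refine h2z_sf.squarefree_of_dvd ?_
      have h1 : D f ∣ ∏ p : {p : ℕ // p ∈ P}, p.1 := by
        apply Finset.prod_dvd_prod_of_dvd
        intro p _
        calc p.1 ^ ((f p).val) ∣ p.1 ^ 1 :=
              pow_dvd_pow _ (by have := ZMod.val_lt (f p); omega)
          _ = p.1 := pow_one _
      have h2 : ∏ p : {p : ℕ // p ∈ P}, p.1 = 2 * z := by
        rw [Finset.prod_coe_sort P (fun p => p)]
        rw [hP, Finset.prod_insert h2P, Nat.prod_primeFactors_of_squarefree hsq]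
      rwa [h2] at h1
    -- divisibility characterisation of D
    have hDdvd : ∀ (f : {p : ℕ // p ∈ P} → ZMod 2) (p : {p : ℕ // p ∈ P}),
        p.1 ∣ D f ↔ (f p).val = 1 := by
      intro f p
      have hp' : p.1.Prime := hPprime p p.2
      constructor
      · intro hdvd
        obtain ⟨q, hq, hdq⟩ := hp'.prime.exists_mem_finset_dvd hdvd
        have hq' : q.1.Prime := hPprime q q.2
        have hpq : p = q := by
          have h1 : p.1 ∣ q.1 := hp'.dvd_of_dvd_pow hdq
          exact Subtype.ext ((Nat.prime_dvd_prime_iff_eq hp' hq').mp h1)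
        subst hpq
        by_contra hne
        have hv : (f p).val = 0 := by have := ZMod.val_lt (f p); omega
        rw [hv, pow_zero, Nat.dvd_one] at hdq
        have := hp'.two_le
        omega
      · intro h1
        have h2 : p.1 ^ ((f p).val) ∣ D f := Finset.dvd_prod_of_mem _ (Finset.mem_univ p)
        rwa [h1, pow_one] at h2
    have hDinj : ∀ f g, D f = D g → f = g := by
      intro f g h
      funext p
      apply hvalinj
      have h1 := hDdvd f p
      have h2 := hDdvd g p
      rw [h] at h1
      have hf := ZMod.val_lt (f p)
      have hg := ZMod.val_lt (g p)
      by_cases hd : p.1 ∣ D g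
      · have e1 := h1.mp hd
        have e2 := h2.mp hd
        omega
      · have e1 : (f p).val ≠ 1 := fun hh => hd (h1.mpr hh)
        have e2 : (g p).val ≠ 1 := fun hh => hd (h2.mpr hh)
        omega
    -- transporting square identities into F
    have hcastF : ∀ (x : 𝓞 F) (n : ℕ), x ^ 2 = (n : 𝓞 F) →
        ((x : F)) ^ 2 = algebraMap ℚ F (n : ℚ) := by
      intro x n hx
      have h2 := congrArg (algebraMap (𝓞 F) F) hx
      rw [map_pow, map_natCast] at h2
      rw [RingOfIntegers.coe_eq_algebraMap, h2]
      simp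
    have hcastFneg : ∀ (x : 𝓞 F) (n : ℕ), x ^ 2 = -(n : 𝓞 F) →
        ((x : F)) ^ 2 = algebraMap ℚ F (-(n : ℚ)) := by
      intro x n hx
      have h2 := congrArg (algebraMap (𝓞 F) F) hx
      rw [map_pow, map_neg, map_natCast] at h2
      rw [RingOfIntegers.coe_eq_algebraMap, h2]
      simp
    -- kernel elements analysis
    have hker_t : ∀ t : Φ.ker, (QuotientGroup.mk (ut t) : (𝓞 F)ˣ ⧸ sqU) = 1 →
        t = 1 ∨ D (fT t) = z := by
      intro t h1
      rw [QuotientGroup.eq_one_iff] at h1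
      obtain ⟨w, hw⟩ := h1
      simp only [powMonoidHom_apply] at hw
      have hx : (gene t * (w : 𝓞 F)) ^ 2 = ((D (fT t) : ℕ) : 𝓞 F) := by
        have h2 : ((w : 𝓞 F)) ^ 2 = ((ut t : (𝓞 F)ˣ) : 𝓞 F) := by
          rw [← hw]; push_cast; ring
        calc (gene t * (w : 𝓞 F)) ^ 2 = (gene t) ^ 2 * ((w : 𝓞 F)) ^ 2 := by ring
          _ = (gene t) ^ 2 * ((ut t : (𝓞 F)ˣ) : 𝓞 F) := by rw [h2]
          _ = _ := hut t
      have hF := hcastF _ _ hx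
      rcases aux_key_sq z F hdeg α hα hli _ _ hF with ⟨x, hxq⟩ | ⟨y, hyq⟩
      · left
        obtain ⟨m, hm⟩ := aux_rat_sq_nat x (D (fT t)) hxq.symm
        have hD1 : D (fT t) = 1 := aux_sq_squarefree _ (hDsf _) m hm
        have hf0 : fT t = 0 := by
          funext p
          apply hvalinj
          have hnp : ¬ p.1 ∣ D (fT t) := by
            rw [hD1]
            intro hcon
            have h3 := Nat.le_of_dvd one_pos hcon
            have h4 := (hPprime p p.2).two_le
            omega
          have h5 : ((fT t) p).val ≠ 1 := fun hh => hnp ((hDdvd (fT t) p).mpr hh)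
          have h6 := ZMod.val_lt ((fT t) p)
          simp only [Pi.zero_apply, ZMod.val_zero]
          omega
        apply Subtype.ext
        exact Multiplicative.toAdd.injective hf0
      · right
        have h1 : (z * y : ℚ) ^ 2 = ((z * D (fT t) : ℕ) : ℚ) := by
          push_cast
          rw [mul_pow]
          rw [hyq]
          ring
        obtain ⟨m, hm⟩ := aux_rat_sq_nat _ _ h1
        exact (aux_mul_sq z (D (fT t)) hsq (hDsf _) hz (hDpos _) m hm).symm
    -- -1 is not in the image
    have hrange_ne : ∀ t : Φ.ker,
        (QuotientGroup.mk (ut t) : (𝓞 F)ˣ ⧸ sqU) ≠ QuotientGroup.mk (-1 : (𝓞 F)ˣ) := by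
      intro t h1
      rw [QuotientGroup.eq] at h1
      obtain ⟨w, hw⟩ := h1
      simp only [powMonoidHom_apply] at hw
      have hwu : (w ^ 2) * (ut t) = -1 := by
        rw [hw, mul_comm ((ut t)⁻¹) (-1 : (𝓞 F)ˣ), mul_assoc, inv_mul_cancel, mul_one]
      have hx : (gene t * ((w * ut t : (𝓞 F)ˣ) : 𝓞 F)) ^ 2 = -((D (fT t) : ℕ) : 𝓞 F) := by
      -- x² = gene² * (w² ut²) = (gene² ut) * (w² ut) = D * (-1)
        have h2 : ((w ^ 2 * ut t : (𝓞 F)ˣ) : 𝓞 F) = -1 := by rw [hwu]; rfl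
        calc (gene t * ((w * ut t : (𝓞 F)ˣ) : 𝓞 F)) ^ 2
            = ((gene t) ^ 2 * (ut t : (𝓞 F)ˣ)) * ((w ^ 2 * ut t : (𝓞 F)ˣ) : 𝓞 F) := by
              push_cast
              ring
          _ = ((D (fT t) : ℕ) : 𝓞 F) * ((w ^ 2 * ut t : (𝓞 F)ˣ) : 𝓞 F) := by rw [hut t]
          _ = -((D (fT t) : ℕ) : 𝓞 F) := by rw [h2]; ring
      have hF := hcastFneg _ _ hx
      have hDpos' : (0:ℚ) < ((D (fT t) : ℕ) : ℚ) := by exact_mod_cast hDpos (fT t)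
      rcases aux_key_sq z F hdeg α hα hli _ _ hF with ⟨x, hxq⟩ | ⟨y, hyq⟩
      · nlinarith [sq_nonneg x]
      · have hz0 : (0:ℚ) ≤ (z:ℚ) := by positivity
        nlinarith [sq_nonneg y]
    -- ψ is a homomorphism
    have hψmul : ∀ t1 t2 : Φ.ker,
        (QuotientGroup.mk (ut (t1 * t2)) : (𝓞 F)ˣ ⧸ sqU) =
          QuotientGroup.mk (ut t1) * QuotientGroup.mk (ut t2) := by
      intro t1 t2
      have htadd : fT (t1 * t2) = fT t1 + fT t2 := rfl
      -- associated generators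
      have hspan : Ideal.span {gene t1 * gene t2} =
          Ideal.span {gene (t1 * t2) * ((M (fT t1) (fT t2) : ℕ) : 𝓞 F)} := by
        rw [← Ideal.span_singleton_mul_span_singleton, ← hgene t1, ← hgene t2,
          hIf_mul (fT t1) (fT t2), ← htadd, hgene (t1*t2),
          Ideal.span_singleton_mul_span_singleton]
      obtain ⟨w, hw⟩ := Ideal.span_singleton_eq_span_singleton.mp hspan
      -- notation
      have e1 := hut t1
      have e2 := hut t2
      have e12 := hut (t1 * t2)
      rw [htadd] at e12
      have hDc : ((D (fT t1) : ℕ) : 𝓞 F) * ((D (fT t2) : ℕ) : 𝓞 F) =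
          ((D (fT t1 + fT t2) : ℕ) : 𝓞 F) * ((M (fT t1) (fT t2) : ℕ) : 𝓞 F) ^ 2 := by
        exact_mod_cast congrArg (fun n : ℕ => (n : 𝓞 F)) (hD_mul (fT t1) (fT t2))
      have hMne : ((M (fT t1) (fT t2) : ℕ) : 𝓞 F) ≠ 0 :=
        Nat.cast_ne_zero.mpr (hMpos (fT t1) (fT t2)).ne'
      have hcancel : ((ut t1 : (𝓞 F)ˣ) : 𝓞 F) * (ut t2 : (𝓞 F)ˣ) =
          ((ut (t1 * t2) : (𝓞 F)ˣ) : 𝓞 F) * ((w : (𝓞 F)ˣ) : 𝓞 F) ^ 2 := by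
        have hnz : (gene (t1*t2) * ((M (fT t1) (fT t2) : ℕ) : 𝓞 F)) ^ 2 *
            ((ut (t1*t2) : (𝓞 F)ˣ) : 𝓞 F) ≠ 0 := by
          apply mul_ne_zero
          · exact pow_ne_zero _ (mul_ne_zero (hgene_ne _) hMne)
          · exact (ut (t1*t2)).ne_zero
        apply mul_right_cancel₀ hnz
        calc ((ut t1 : (𝓞 F)ˣ) : 𝓞 F) * (ut t2 : (𝓞 F)ˣ) *
              ((gene (t1*t2) * ((M (fT t1) (fT t2) : ℕ) : 𝓞 F)) ^ 2 * (ut (t1*t2) : (𝓞 F)ˣ)) =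
            ((gene t1 * gene t2) * w) ^ 2 * ((ut t1 : (𝓞 F)ˣ) * (ut t2 : (𝓞 F)ˣ) * (ut (t1*t2) : (𝓞 F)ˣ)) := by
              rw [hw]; ring
          _ = ((gene t1) ^ 2 * (ut t1 : (𝓞 F)ˣ)) * ((gene t2) ^ 2 * (ut t2 : (𝓞 F)ˣ)) *
              (((w : (𝓞 F)ˣ) : 𝓞 F) ^ 2 * (ut (t1*t2) : (𝓞 F)ˣ)) := by ring
          _ = ((D (fT t1) : ℕ) : 𝓞 F) * ((D (fT t2) : ℕ) : 𝓞 F) *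
              (((w : (𝓞 F)ˣ) : 𝓞 F) ^ 2 * (ut (t1*t2) : (𝓞 F)ˣ)) := by rw [e1, e2]
          _ = ((D (fT t1 + fT t2) : ℕ) : 𝓞 F) * ((M (fT t1) (fT t2) : ℕ) : 𝓞 F) ^ 2 *
              (((w : (𝓞 F)ˣ) : 𝓞 F) ^ 2 * (ut (t1*t2) : (𝓞 F)ˣ)) := by rw [hDc]
          _ = ((gene (t1*t2)) ^ 2 * (ut (t1*t2) : (𝓞 F)ˣ)) * ((M (fT t1) (fT t2) : ℕ) : 𝓞 F) ^ 2 *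
              (((w : (𝓞 F)ˣ) : 𝓞 F) ^ 2 * (ut (t1*t2) : (𝓞 F)ˣ)) := by rw [e12]
          _ = _ := by ring
      have huts : ut t1 * ut t2 = ut (t1 * t2) * w ^ 2 := by
        apply Units.ext
        push_cast
        exact hcancel
      have hmm : (QuotientGroup.mk (ut t1) : (𝓞 F)ˣ ⧸ sqU) * QuotientGroup.mk (ut t2) =
          QuotientGroup.mk (ut t1 * ut t2) := rfl
      rw [hmm, huts, QuotientGroup.eq]
      refine ⟨w, ?_⟩
      simp only [powMonoidHom_apply]
      group
    let ψ : Φ.ker →* ((𝓞 F)ˣ ⧸ sqU) :=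
      MonoidHom.mk' (fun t => QuotientGroup.mk (ut t)) hψmul
    -- kernel of ψ has at most 2 elements
    have hfinUq : Finite ((𝓞 F)ˣ ⧸ sqU) := hUfin
    have hkerψ : Nat.card ψ.ker ≤ 2 := by
      have hinj : Function.Injective
          (fun t : ψ.ker => ((t : Φ.ker) = 1 : Prop)) := by
        intro t1 t2 h12
        have hiff := Iff.of_eq h12
        by_cases hc1 : (t1 : Φ.ker) = 1
        · exact Subtype.ext (hc1.trans (hiff.mp hc1).symm)
        · have hc2 : ¬ (t2 : Φ.ker) = 1 := fun h => hc1 (hiff.mpr h)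
          have hd1 := hker_t (t1 : Φ.ker) t1.2
          have hd2 := hker_t (t2 : Φ.ker) t2.2
          rcases hd1 with h | h
          · exact absurd h hc1
          rcases hd2 with h' | h'
          · exact absurd h' hc2
          have heq : fT (t1 : Φ.ker) = fT (t2 : Φ.ker) := hDinj _ _ (h.trans h'.symm)
          apply Subtype.ext
          apply Subtype.ext
          exact Multiplicative.toAdd.injective heq
      calc Nat.card ψ.ker ≤ Nat.card Prop := Nat.card_le_card_of_injective _ hinj
        _ = 2 := by simp [Nat.card_eq_fintype_card]
    -- range of ψ has at most 2 elements
    have hrangeψ : Nat.card ψ.range ≤ 2 := by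
      apply aux_subgroup_card _ _ hUcard
      intro htop
      have hmem : (QuotientGroup.mk (-1 : (𝓞 F)ˣ) : (𝓞 F)ˣ ⧸ sqU) ∈ ψ.range := by
        rw [htop]; trivial
      obtain ⟨t, ht⟩ := hmem
      exact hrange_ne t ht
    calc Nat.card Φ.ker
        = Nat.card (Φ.ker ⧸ ψ.ker) * Nat.card ψ.ker :=
          Subgroup.card_eq_card_quotient_mul_card_subgroup ψ.ker
      _ = Nat.card ψ.range * Nat.card ψ.ker := by
          rw [Nat.card_congr (QuotientGroup.quotientKerEquivRange ψ).toEquiv]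
      _ ≤ 2 * 2 := Nat.mul_le_mul hrangeψ hkerψ
      _ ≤ 4 := by norm_num

  exact aux_final_arith s _ _ _ hsplit hker4 hrange_dvd
end
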